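/- arXiv:1512.06371 — 3 statements merged into one kernel-verified Lean document; each statement's English description precedes it below -/
import Mathlib

section
/- For every simple graph G on the positive integers that contains no increasing path of length 4 (no vertices i_1 < i_2 < i_3 < i_4 < i_5 with i_j adjacent to i_{j+1} for 1 ≤ j ≤ 4), the limit inferior as n → ∞ of e(G_n)/n² is at most 1/4. -/
open Filter

/-- `G` contains an increasing path of length `k`: vertices
`i₁ < i₂ < ⋯ < i_{k+1}` (all positive integers) with consecutive vertices adjacent. -/
def HasIncPath (G : SimpleGraph ℕ) (k : ℕ) : Prop :=
  ∃ f : Fin (k + 1) → ℕ, (∀ i, 1 ≤ f i) ∧ StrictMono f ∧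
    ∀ i : Fin k, G.Adj (f i.castSucc) (f i.succ)

/-- `e(G_n)`: the number of edges of the subgraph of `G` induced by `{1, …, n}`. -/
noncomputable def edgeCount (G : SimpleGraph ℕ) (n : ℕ) : ℕ :=
  {p : ℕ × ℕ | 1 ≤ p.1 ∧ p.1 < p.2 ∧ p.2 ≤ n ∧ G.Adj p.1 p.2}.ncard

/-!
Colour each vertex `v` by the length, capped at `3`, of the longest increasing path ending at
`v`. In an `I₄`-free graph the colour strictly increases along every edge `u < v`, so `e(G_n)`
is at most the number of pairs `u < v ≤ n` with `c u < c v`. For any colouring `c` with four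
colours let `p(n)` be that number divided by `n²` and `x(n)` the vector of colour densities in
`[1, n]`. Counting the pairs whose larger element lies in `(t, 2t]` colour class by colour class,
and a sum-of-squares inequality, show that `4 p(n) + V(x(n))`, for an explicit quadratic `V`,
drops by at least `3 (p(t) - 1/4)` from `t` to `2t`, while it never falls below `-9/4`. Hence
`p` cannot stay above `1/4 + ε` along `t, 2t, 4t, …`.
-/

open Finset

namespace SimpleGraph

variable {G : SimpleGraph ℕ}

def HasIncPathTo (G : SimpleGraph ℕ) (k v : ℕ) : Prop :=
  ∃ f : Fin (k + 1) → ℕ, (∀ i, 1 ≤ f i) ∧ StrictMono f ∧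
    (∀ i : Fin k, G.Adj (f i.castSucc) (f i.succ)) ∧ f (Fin.last k) = v

lemma hasIncPathTo_zero {v : ℕ} (hv : 1 ≤ v) : G.HasIncPathTo 0 v :=
  ⟨fun _ => v, fun _ => hv, Subsingleton.strictMono (α := Fin 1) _, fun i => i.elim0, rfl⟩

lemma HasIncPathTo.snoc {k u v : ℕ} (h : G.HasIncPathTo k u) (huv : u < v) (hadj : G.Adj u v) :
    G.HasIncPathTo (k + 1) v := by
  obtain ⟨f, hpos, hmono, hadjf, rfl⟩ := h
  refine ⟨Fin.snoc f v, Fin.lastCases ?_ ?_, Fin.strictMono_iff_lt_succ.2 <| Fin.lastCases ?_ ?_,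
    Fin.lastCases ?_ ?_, by simp⟩
  · simpa using (hpos _).trans huv.le
  · simpa using hpos
  · simpa [Fin.succ_last] using huv
  · intro i
    simpa only [Fin.succ_castSucc, Fin.snoc_castSucc] using hmono i.castSucc_lt_succ
  · simpa [Fin.succ_last] using hadj
  · intro i
    simpa only [Fin.succ_castSucc, Fin.snoc_castSucc] using hadjf i

lemma HasIncPathTo.hasIncPath {k v : ℕ} (h : G.HasIncPathTo k v) : HasIncPath G k :=
  let ⟨f, hpos, hmono, hadj, _⟩ := h
  ⟨f, hpos, hmono, hadj⟩

open Classical in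
noncomputable def incHeight (G : SimpleGraph ℕ) (k v : ℕ) : ℕ :=
  Nat.findGreatest (G.HasIncPathTo · v) k

lemma incHeight_le (k v : ℕ) : G.incHeight k v ≤ k := by
  classical exact Nat.findGreatest_le k

lemma incHeight_lt_of_adj {k u v : ℕ} (hG : ¬ HasIncPath G (k + 1)) (hu : 1 ≤ u) (huv : u < v)
    (hadj : G.Adj u v) : G.incHeight k u < G.incHeight k v := by
  classical
  have hpath : G.HasIncPathTo (G.incHeight k u + 1) v :=
    (Nat.findGreatest_spec (P := (G.HasIncPathTo · u)) (Nat.zero_le k)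
      (hasIncPathTo_zero hu)).snoc huv hadj
  have hlt : G.incHeight k u < k := (incHeight_le k u).lt_of_ne fun h => hG (h ▸ hpath.hasIncPath)
  exact Nat.le_findGreatest hlt hpath

end SimpleGraph

def incPairs (c : ℕ → ℕ) (n : ℕ) : ℕ := #{p ∈ Icc 1 n ×ˢ Icc 1 n | p.1 < p.2 ∧ c p.1 < c p.2}

def colorCount (c : ℕ → ℕ) (s : Finset ℕ) (i : ℕ) : ℕ := #{v ∈ s | c v = i}

section Coloring

variable {c : ℕ → ℕ}

lemma edgeCount_le_incPairs {G : SimpleGraph ℕ}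
    (hc : ∀ u v, 1 ≤ u → u < v → G.Adj u v → c u < c v) (n : ℕ) :
    edgeCount G n ≤ incPairs c n := by
  rw [edgeCount, incPairs, ← Set.ncard_coe_finset]
  refine Set.ncard_le_ncard (fun p ⟨h1, hlt, hn, hadj⟩ => ?_) (Finset.finite_toSet _)
  simp only [coe_filter, mem_product, mem_Icc, Set.mem_ofPred_eq]
  exact ⟨⟨⟨h1, by omega⟩, by omega, hn⟩, hlt, hc _ _ h1 hlt hadj⟩

lemma incPairs_two_mul_le (c : ℕ → ℕ) (t : ℕ) :
    incPairs c (2 * t) ≤ incPairs c t + #{p ∈ Icc 1 (2 * t) ×ˢ Ioc t (2 * t) | c p.1 < c p.2} := by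
  rw [incPairs, ← card_filter_add_card_filter_not fun p => p.2 ≤ t, filter_filter, filter_filter]
  gcongr
  · refine card_le_card fun p hp => ?_
    simp only [mem_filter, mem_product, mem_Icc] at hp ⊢
    omega
  · intro p hp
    simp only [mem_filter, mem_product, mem_Icc, mem_Ioc] at hp ⊢
    omega

lemma sum_colorCount {s : Finset ℕ} {m : ℕ} (hc : ∀ v ∈ s, c v < m) :
    ∑ i ∈ range m, colorCount c s i = #s :=
  (card_eq_sum_card_fiberwise fun v hv => mem_range.2 (hc v hv)).symm

lemma colorCount_union {s s' : Finset ℕ} (h : Disjoint s s') (i : ℕ) :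
    colorCount c (s ∪ s') i = colorCount c s i + colorCount c s' i := by
  rw [colorCount, filter_union, card_union_of_disjoint (disjoint_filter_filter h)]
  rfl

lemma colorCount_Icc_two_mul (t i : ℕ) :
    colorCount c (Icc 1 (2 * t)) i = colorCount c (Icc 1 t) i + colorCount c (Ioc t (2 * t)) i := by
  have hIcc : Icc 1 (2 * t) = Icc 1 t ∪ Ioc t (2 * t) := by
    ext v
    simp only [mem_union, mem_Icc, mem_Ioc]
    omega
  rw [hIcc, colorCount_union (disjoint_left.2 fun v hv hv' => by
    simp only [mem_Icc, mem_Ioc] at hv hv'; omega)]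

lemma card_filter_lt_eq_sum_colorCount (s : Finset ℕ) (j : ℕ) :
    #{u ∈ s | c u < j} = ∑ i ∈ range j, colorCount c s i := by
  rw [card_eq_sum_card_fiberwise fun u hu => mem_range.2 (mem_filter.1 hu).2]
  refine sum_congr rfl fun i hi => ?_
  rw [filter_filter, colorCount]
  congr 1
  exact filter_congr fun u _ => and_iff_right_of_imp fun h => h ▸ mem_range.1 hi

lemma card_filter_lt_product {s w : Finset ℕ} {m : ℕ} (hc : ∀ v ∈ w, c v < m) :
    #{p ∈ s ×ˢ w | c p.1 < c p.2} =
      ∑ j ∈ range m, (∑ i ∈ range j, colorCount c s i) * colorCount c w j := by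
  rw [card_eq_sum_card_fiberwise (f := fun p => c p.2) (t := range m)
    fun p hp => mem_range.2 (hc _ (mem_product.1 (mem_filter.1 hp).1).2)]
  refine sum_congr rfl fun j _ => ?_
  have hfib : {p ∈ {p ∈ s ×ˢ w | c p.1 < c p.2} | c p.2 = j} =
      {u ∈ s | c u < j} ×ˢ {v ∈ w | c v = j} := by
    ext ⟨u, v⟩
    simp only [mem_filter, mem_product]
    constructor
    · rintro ⟨⟨⟨hu, hv⟩, hlt⟩, rfl⟩
      exact ⟨⟨hu, hlt⟩, hv, rfl⟩
    · rintro ⟨⟨hu, hlt⟩, hv, rfl⟩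
      exact ⟨⟨⟨hu, hv⟩, hlt⟩, rfl⟩
  rw [hfib, card_product, card_filter_lt_eq_sum_colorCount]
  rfl

lemma sum_colorCount_four (hc : ∀ v, c v < 4) (s : Finset ℕ) :
    (colorCount c s 0 + colorCount c s 1 + colorCount c s 2 + colorCount c s 3 : ℝ) = #s := by
  rw [← sum_colorCount (s := s) fun v _ => hc v]
  simp [sum_range_succ]

end Coloring

noncomputable def colorPotential (x₀ x₁ x₂ x₃ : ℝ) : ℝ :=
  -(3 / 2) * (x₀ * x₁ + x₀ * x₂ + x₀ * x₃ + x₁ * x₂ + x₁ * x₃ + x₂ * x₃) -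
    (x₁ + 2 * x₂ + 3 * x₃) / 2

/-- Equality holds at `x = y = (1/4, 1/4, 1/4, 1/4)`; the hints are a sum-of-squares
certificate in the remaining six coordinates. -/
lemma colorPotential_midpoint_le (x₀ x₁ x₂ x₃ y₀ y₁ y₂ y₃ : ℝ) (hx : x₀ + x₁ + x₂ + x₃ = 1)
    (hy : y₀ + y₁ + y₂ + y₃ = 1) :
    (x₀ + y₀) * y₁ + (x₀ + y₀ + x₁ + y₁) * y₂ + (x₀ + y₀ + x₁ + y₁ + x₂ + y₂) * y₃ ≤
      3 / 4 + colorPotential x₀ x₁ x₂ x₃ -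
        colorPotential ((x₀ + y₀) / 2) ((x₁ + y₁) / 2) ((x₂ + y₂) / 2) ((x₃ + y₃) / 2) := by
  obtain rfl : x₃ = 1 - x₀ - x₁ - x₂ := by linarith
  obtain rfl : y₃ = 1 - y₀ - y₁ - y₂ := by linarith
  simp only [colorPotential]
  nlinarith [sq_nonneg ((x₀ - 1/4) + (x₁ - 1/4)/2 + (x₂ - 1/4)/2 + (y₀ - 1/4)/9 - (y₁ - 1/4)/6
      - (y₂ - 1/4)/6),
    sq_nonneg ((x₁ - 1/4) + (x₂ - 1/4)/3 + 8*(y₀ - 1/4)/27 + 7*(y₁ - 1/4)/27 - (y₂ - 1/4)/9),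
    sq_nonneg ((x₂ - 1/4) + 2*(y₀ - 1/4)/9 + 4*(y₁ - 1/4)/9 + (y₂ - 1/4)/3),
    sq_nonneg ((y₀ - 1/4) + 7*(y₁ - 1/4)/18 + 11*(y₂ - 1/4)/18),
    sq_nonneg ((y₁ - 1/4) + 7*(y₂ - 1/4)/29),
    sq_nonneg (y₂ - 1/4)]

lemma colorPotential_ge {x₀ x₁ x₂ x₃ : ℝ} (h₀ : 0 ≤ x₀) (h₁ : 0 ≤ x₁) (h₂ : 0 ≤ x₂) (h₃ : 0 ≤ x₃)
    (hx : x₀ + x₁ + x₂ + x₃ = 1) : -(9 / 4) ≤ colorPotential x₀ x₁ x₂ x₃ := by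
  simp only [colorPotential]
  nlinarith [sq_nonneg x₀, sq_nonneg x₁, sq_nonneg x₂, sq_nonneg x₃]

noncomputable def colorDensity (c : ℕ → ℕ) (n i : ℕ) : ℝ := colorCount c (Icc 1 n) i / n

noncomputable def pairDensity (c : ℕ → ℕ) (n : ℕ) : ℝ := incPairs c n / n ^ 2

noncomputable def pairPotential (c : ℕ → ℕ) (n : ℕ) : ℝ :=
  4 * pairDensity c n + colorPotential (colorDensity c n 0) (colorDensity c n 1)
    (colorDensity c n 2) (colorDensity c n 3)

section Density

variable {c : ℕ → ℕ}

lemma colorDensity_two_mul (t i : ℕ) :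
    colorDensity c (2 * t) i = (colorDensity c t i + colorCount c (Ioc t (2 * t)) i / t) / 2 := by
  simp only [colorDensity, colorCount_Icc_two_mul]
  push_cast
  ring

lemma pairPotential_ge (hc : ∀ v, c v < 4) {n : ℕ} (hn : 1 ≤ n) : -(9 / 4) ≤ pairPotential c n := by
  have hn' : (n : ℝ) ≠ 0 := by positivity
  have hsum :
      colorDensity c n 0 + colorDensity c n 1 + colorDensity c n 2 + colorDensity c n 3 = 1 := by
    simp only [colorDensity, ← add_div, sum_colorCount_four hc, Nat.card_Icc, add_tsub_cancel_right,
      div_self hn']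
  have hpos : 0 ≤ pairDensity c n := by unfold pairDensity; positivity
  have hnonneg (i : ℕ) : 0 ≤ colorDensity c n i := by unfold colorDensity; positivity
  have := colorPotential_ge (hnonneg 0) (hnonneg 1) (hnonneg 2) (hnonneg 3) hsum
  unfold pairPotential
  linarith

lemma pairPotential_two_mul_le (hc : ∀ v, c v < 4) {t : ℕ} (ht : 1 ≤ t) :
    pairPotential c (2 * t) ≤ pairPotential c t - 3 * (pairDensity c t - 1 / 4) := by
  set a : ℕ → ℝ := fun i => colorCount c (Icc 1 t) i
  set b : ℕ → ℝ := fun i => colorCount c (Ioc t (2 * t)) i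
  have htr : (0 : ℝ) < t := by exact_mod_cast ht
  have hpairs : (incPairs c (2 * t) : ℝ) ≤ incPairs c t +
      ((a 0 + b 0) * b 1 + (a 0 + b 0 + (a 1 + b 1)) * b 2 +
        (a 0 + b 0 + (a 1 + b 1) + (a 2 + b 2)) * b 3) := by
    have := incPairs_two_mul_le c t
    rw [card_filter_lt_product (m := 4) fun v _ => hc v] at this
    simpa [sum_range_succ, colorCount_Icc_two_mul] using (Nat.cast_le (α := ℝ)).2 this
  have hP : 4 * pairDensity c (2 * t) ≤ pairDensity c t +
      ((a 0 + b 0) * b 1 + (a 0 + b 0 + (a 1 + b 1)) * b 2 +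
        (a 0 + b 0 + (a 1 + b 1) + (a 2 + b 2)) * b 3) / t ^ 2 := by
    have h4 : 4 * pairDensity c (2 * t) = incPairs c (2 * t) / t ^ 2 := by
      rw [pairDensity]; push_cast; field_simp; ring
    rw [h4, pairDensity, ← add_div]
    gcongr
  have hsum (f : ℕ → ℝ) (hf : f 0 + f 1 + f 2 + f 3 = t) :
      f 0 / t + f 1 / t + f 2 / t + f 3 / t = 1 := by
    rw [← add_div, ← add_div, ← add_div, hf, div_self htr.ne']
  have hcert := colorPotential_midpoint_le _ _ _ _ _ _ _ _
    (hsum a (by simpa [a] using sum_colorCount_four hc (Icc 1 t)))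
    (hsum b (by simpa [b, two_mul] using sum_colorCount_four hc (Ioc t (2 * t))))
  have hS : (a 0 / t + b 0 / t) * (b 1 / t) + (a 0 / t + b 0 / t + a 1 / t + b 1 / t) * (b 2 / t) +
      (a 0 / t + b 0 / t + a 1 / t + b 1 / t + a 2 / t + b 2 / t) * (b 3 / t) =
      ((a 0 + b 0) * b 1 + (a 0 + b 0 + (a 1 + b 1)) * b 2 +
        (a 0 + b 0 + (a 1 + b 1) + (a 2 + b 2)) * b 3) / t ^ 2 := by
    field_simp
    ring
  simp only [pairPotential, colorDensity_two_mul]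
  change _ + colorPotential ((a 0 / t + b 0 / t) / 2) ((a 1 / t + b 1 / t) / 2)
    ((a 2 / t + b 2 / t) / 2) ((a 3 / t + b 3 / t) / 2) ≤
    4 * pairDensity c t + colorPotential (a 0 / t) (a 1 / t) (a 2 / t) (a 3 / t) - _
  linarith

theorem frequently_pairDensity_lt (hc : ∀ v, c v < 4) {ε : ℝ} (hε : 0 < ε) :
    ∃ᶠ n in atTop, pairDensity c n < 1 / 4 + ε := by
  rw [frequently_atTop]
  intro N
  by_contra! h
  set n : ℕ → ℕ := fun k => max N 1 * 2 ^ k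
  have hn (k : ℕ) : 1 ≤ n k := Nat.one_le_iff_ne_zero.2 (by positivity)
  have hstep (k : ℕ) : pairPotential c (n (k + 1)) ≤ pairPotential c (n k) - 3 * ε := by
    have := pairPotential_two_mul_le hc (hn k)
    have := h (n k) ((le_max_left N 1).trans (Nat.le_mul_of_pos_right _ (by positivity)))
    rw [show n (k + 1) = 2 * n k by simp only [n]; ring]
    linarith
  have hdecr (k : ℕ) : pairPotential c (n k) ≤ pairPotential c (n 0) - 3 * ε * k := by
    induction k with
    | zero => simp
    | succ k ih => push_cast; linarith [hstep k]
  obtain ⟨k, hk⟩ := exists_nat_gt ((pairPotential c (n 0) + 9 / 4) / (3 * ε))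
  rw [div_lt_iff₀ (by positivity)] at hk
  linarith [hdecr k, pairPotential_ge hc (hn k)]

end Density

theorem liminf_le_of_I4_free (G : SimpleGraph ℕ) (hG : ¬ HasIncPath G 4) :
    liminf (fun n : ℕ => (edgeCount G n : ℝ) / n ^ 2) atTop ≤ 1 / 4 := by
  have hc : ∀ v, G.incHeight 3 v < 4 := fun v => Nat.lt_succ_of_le (G.incHeight_le 3 v)
  have hle (n : ℕ) : (edgeCount G n : ℝ) / n ^ 2 ≤ pairDensity (G.incHeight 3) n := by
    unfold pairDensity
    gcongr
    exact edgeCount_le_incPairs (fun u v hu huv hadj => G.incHeight_lt_of_adj hG hu huv hadj) n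
  set f : ℕ → ℝ := fun n => (edgeCount G n : ℝ) / n ^ 2
  by_contra! h
  have hf : IsBoundedUnder (· ≥ ·) atTop f :=
    isBoundedUnder_of_eventually_ge (.of_forall fun n => by positivity)
  have hδ : 0 < (liminf f atTop - 1 / 4) / 2 := by linarith
  obtain ⟨n, hlt, hgt⟩ := ((eventually_lt_of_lt_liminf (b := 1 / 4 + (liminf f atTop - 1 / 4) / 2)
    (by linarith) hf).and_frequently (frequently_pairDensity_lt hc hδ)).exists
  linarith [hle n]
end

section
/- There exists a simple graph G on the positive integers that is I_4-free and satisfies liminf_{n→∞} e(G_n)/n² ≥ 109513/584064, i.e., ≥ (1/4)(1 − 1/4) + 1/584064. -/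
open Filter

/-!
Colour the vertices with `0, 1, 2, 3` and join `u < v` exactly when the colour increases; the
colours strictly increase along an increasing path, so there is no `I₄`. The colouring is
dyadically self-similar: the block `[256 · 2^j, 512 · 2^j)` consists of `256` cells of length
`2^j` coloured by a fixed pattern. All vertices of a cell share a colour, so `e(G_n)` is affine in
`n` inside a cell, while at the cell endpoints it is a quadratic in `2^j` whose coefficients are
prefix statistics of the pattern. As `c n²` is convex, `e(G_n) ≥ c n²` for all large `n` reduces
to three inequalities per cell, which are checked by computation for the chosen pattern.
-/

open Finset

def colorGraph (φ : ℕ → ℕ) : SimpleGraph ℕ :=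
  SimpleGraph.fromRel fun u v => u < v ∧ φ u < φ v

lemma colorGraph_adj_of_lt {φ : ℕ → ℕ} {u v : ℕ} (h : (colorGraph φ).Adj u v)
    (huv : u < v) : φ u < φ v := by
  simp only [colorGraph, SimpleGraph.fromRel_adj] at h
  omega

theorem not_hasIncPath_colorGraph {φ : ℕ → ℕ} {k : ℕ} (hφ : ∀ u, φ u < k) :
    ¬ HasIncPath (colorGraph φ) k := by
  rintro ⟨f, -, hf, hadj⟩
  have hrise : ∀ i : Fin (k + 1), (i : ℕ) ≤ φ (f i) := by
    intro i
    induction i using Fin.induction with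
    | zero => exact Nat.zero_le _
    | succ i ih =>
      have := colorGraph_adj_of_lt (hadj i) (hf i.castSucc_lt_succ)
      simp only [Fin.val_succ, Fin.val_castSucc] at ih ⊢
      omega
  exact (hrise (Fin.last k)).not_gt (hφ _)

lemma edgeCount_le_sq (G : SimpleGraph ℕ) (n : ℕ) : edgeCount G n ≤ n ^ 2 := by
  have hsub : {p : ℕ × ℕ | 1 ≤ p.1 ∧ p.1 < p.2 ∧ p.2 ≤ n ∧ G.Adj p.1 p.2} ⊆
      ↑(Icc 1 n ×ˢ Icc 1 n) := by
    rintro ⟨u, v⟩ ⟨h1, h2, h3, -⟩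
    simp only [coe_product, coe_Icc, Set.mem_prod, Set.mem_Icc]
    omega
  calc edgeCount G n ≤ (↑(Icc 1 n ×ˢ Icc 1 n) : Set (ℕ × ℕ)).ncard :=
        Set.ncard_le_ncard hsub (Finset.finite_toSet _)
    _ = n ^ 2 := by rw [Set.ncard_coe_finset, card_product, Nat.card_Icc, Nat.add_sub_cancel, sq]

lemma le_liminf_edgeCount_div_sq (G : SimpleGraph ℕ) {c : ℝ}
    (h : ∀ᶠ n : ℕ in atTop, c * n ^ 2 ≤ edgeCount G n) :
    c ≤ liminf (fun n : ℕ => (edgeCount G n : ℝ) / n ^ 2) atTop := by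
  have hbdd : ∀ n : ℕ, (edgeCount G n : ℝ) / n ^ 2 ≤ 1 := fun n =>
    div_le_one_of_le₀ (by exact_mod_cast edgeCount_le_sq G n) (by positivity)
  refine le_liminf_of_le (isCoboundedUnder_ge_of_le atTop hbdd) ?_
  filter_upwards [h, eventually_gt_atTop 0] with n hn hn0
  rwa [le_div_iff₀ (by positivity)]

def countBelow (φ : ℕ → ℕ) (l n : ℕ) : ℕ := #{u ∈ Ico 1 n | φ u < l}

def edgeSum (φ : ℕ → ℕ) (n : ℕ) : ℕ := ∑ v ∈ Ico 1 n, countBelow φ (φ v) v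

lemma edgeCount_colorGraph (φ : ℕ → ℕ) (n : ℕ) :
    edgeCount (colorGraph φ) n = edgeSum φ (n + 1) := by
  have hset :
      {p : ℕ × ℕ | 1 ≤ p.1 ∧ p.1 < p.2 ∧ p.2 ≤ n ∧ (colorGraph φ).Adj p.1 p.2} =
      ↑{p ∈ Ico 1 (n + 1) ×ˢ Ico 1 (n + 1) | p.1 < p.2 ∧ φ p.1 < φ p.2} := by
    ext ⟨u, v⟩
    simp only [colorGraph, SimpleGraph.fromRel_adj, Set.mem_ofPred_eq, coe_filter, mem_product,
      mem_Ico]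
    constructor <;> intro h <;> omega
  rw [edgeCount, hset, Set.ncard_coe_finset, card_filter, sum_product_right, edgeSum]
  refine sum_congr rfl fun v hv => ?_
  rw [← card_filter, countBelow]
  congr 1
  ext u
  simp only [mem_Ico, mem_filter] at hv ⊢
  omega

lemma countBelow_add {φ : ℕ → ℕ} {a t c : ℕ} (l : ℕ) (ha : 1 ≤ a)
    (hc : ∀ u ∈ Ico a (a + t), φ u = c) :
    countBelow φ l (a + t) = countBelow φ l a + if c < l then t else 0 := by
  rw [countBelow, countBelow, card_filter, card_filter,
    ← sum_Ico_consecutive _ ha (Nat.le_add_right a t)]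
  congr 1
  rw [sum_congr rfl fun u hu => by rw [hc u hu]]
  split_ifs <;> simp

lemma edgeSum_add {φ : ℕ → ℕ} {a t c : ℕ} (ha : 1 ≤ a)
    (hc : ∀ u ∈ Ico a (a + t), φ u = c) :
    edgeSum φ (a + t) = edgeSum φ a + t * countBelow φ c a := by
  rw [edgeSum, edgeSum, ← sum_Ico_consecutive _ ha (Nat.le_add_right a t)]
  congr 1
  rw [sum_congr rfl fun v hv => ?_, sum_const, Nat.card_Ico, smul_eq_mul, Nat.add_sub_cancel_left]
  obtain ⟨t', rfl⟩ := Nat.exists_eq_add_of_le (mem_Ico.1 hv).1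
  rw [hc _ hv, countBelow_add c ha fun u hu => hc u (by simp only [mem_Ico] at hu hv ⊢; omega)]
  simp

/-- Below `b` the colour is `0`; the block `[b 2^j, b 2^(j+1))` is cut into `b` cells
`[(b + k) 2^j, (b + k + 1) 2^j)` of length `2^j`, and cell `k` gets colour `p k`. -/
def dyadicColoring (b : ℕ) (p : ℕ → ℕ) (u : ℕ) : ℕ :=
  if u < b then 0 else p (u / 2 ^ Nat.log 2 (u / b) - b)

section DyadicColoring

variable {b : ℕ} {p : ℕ → ℕ}

lemma dyadicColoring_of_lt {u : ℕ} (h : u < b) : dyadicColoring b p u = 0 := if_pos h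

lemma dyadicColoring_of_mem_cell {j k u : ℕ} (hk : k < b)
    (hu : u ∈ Ico ((b + k) * 2 ^ j) ((b + k) * 2 ^ j + 2 ^ j)) : dyadicColoring b p u = p k := by
  rw [mem_Ico] at hu
  have hb : 0 < b := by omega
  have hpow : 0 < 2 ^ j := by positivity
  have hlo : b * 2 ^ j ≤ u := le_trans (Nat.mul_le_mul_right _ (by omega)) hu.1
  have hhi : u < b * 2 ^ (j + 1) :=
    lt_of_lt_of_le hu.2 (by rw [pow_succ]; nlinarith)
  have hlog : Nat.log 2 (u / b) = j := by
    refine Nat.log_eq_of_pow_le_of_lt_pow ?_ ?_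
    · rw [Nat.le_div_iff_mul_le hb, mul_comm]; exact hlo
    · rw [Nat.div_lt_iff_lt_mul hb, mul_comm]; exact hhi
  have hcell : u / 2 ^ j = b + k := Nat.div_eq_of_lt_le hu.1 (by rw [add_one_mul]; exact hu.2)
  rw [dyadicColoring, if_neg (by nlinarith), hlog, hcell, Nat.add_sub_cancel_left]

lemma exists_mem_cell (hb : 0 < b) {u : ℕ} (hu : 2 * b ≤ u) :
    ∃ j k, 1 ≤ j ∧ k < b ∧ u ∈ Ico ((b + k) * 2 ^ j) ((b + k) * 2 ^ j + 2 ^ j) := by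
  set j := Nat.log 2 (u / b)
  have hj : 1 ≤ j := Nat.log_pos one_lt_two ((Nat.le_div_iff_mul_le hb).2 (by linarith))
  have hlo : b * 2 ^ j ≤ u := by
    rw [mul_comm, ← Nat.le_div_iff_mul_le hb]
    exact Nat.pow_log_le_self 2 (Nat.div_pos (by omega) hb).ne'
  have hhi : u < 2 * b * 2 ^ j := by
    have := Nat.lt_pow_succ_log_self one_lt_two (u / b)
    rw [Nat.div_lt_iff_lt_mul hb, Nat.pow_succ] at this
    linarith
  have hpow : 0 < 2 ^ j := by positivity
  have hq1 : b ≤ u / 2 ^ j := (Nat.le_div_iff_mul_le hpow).2 hlo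
  have hq2 : u / 2 ^ j < 2 * b := (Nat.div_lt_iff_lt_mul hpow).2 hhi
  refine ⟨j, u / 2 ^ j - b, hj, by omega, ?_⟩
  rw [Nat.add_sub_cancel' hq1, mem_Ico]
  exact ⟨Nat.div_mul_le_self u _, Nat.lt_div_mul_add hpow⟩

end DyadicColoring

section PatternStatistics

variable (p : ℕ → ℕ) (b : ℕ)

def prefixCount (l : ℕ) : ℕ → ℕ
  | 0 => 0
  | k + 1 => prefixCount l k + if p k < l then 1 else 0

def cellSlope (i : ℕ) : ℕ := prefixCount p (p i) i + prefixCount p (p i) b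

def cellOffset (i : ℕ) : ℤ := (if 0 < p i then (b : ℤ) - 1 else 0) - prefixCount p (p i) b

def slopeSum : ℕ → ℕ
  | 0 => 0
  | k + 1 => slopeSum k + cellSlope p b k

def offsetSum : ℕ → ℤ
  | 0 => 0
  | k + 1 => offsetSum k + cellOffset p b k

end PatternStatistics

section BoundaryFormulas

variable {b : ℕ} {p : ℕ → ℕ}

lemma one_le_cell_start (hb : 0 < b) (k j : ℕ) : 1 ≤ (b + k) * 2 ^ j :=
  Nat.mul_pos (by omega) (Nat.two_pow_pos j)

lemma cell_start_succ (b k j : ℕ) : (b + (k + 1)) * 2 ^ j = (b + k) * 2 ^ j + 2 ^ j := by ring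

lemma countBelow_cell_start_of_block (l j : ℕ) {k : ℕ} (hk : k ≤ b) :
    countBelow (dyadicColoring b p) l ((b + k) * 2 ^ j) =
      countBelow (dyadicColoring b p) l (b * 2 ^ j) + 2 ^ j * prefixCount p l k := by
  induction k with
  | zero => simp [prefixCount]
  | succ k ih =>
    rw [cell_start_succ,
      countBelow_add (φ := dyadicColoring b p) l (one_le_cell_start (b := b) (by omega) k j)
      fun u hu => dyadicColoring_of_mem_cell (by omega) hu, ih (by omega), prefixCount]
    split_ifs <;> ring

lemma countBelow_block_start (hb : 0 < b) (l j : ℕ) :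
    (countBelow (dyadicColoring b p) l (b * 2 ^ j) : ℤ) =
      (if 0 < l then (b : ℤ) - 1 else 0) + (2 ^ j - 1) * prefixCount p l b := by
  induction j with
  | zero =>
    have : countBelow (dyadicColoring b p) l b = if 0 < l then b - 1 else 0 := by
      rw [countBelow, filter_congr fun u hu => by rw [dyadicColoring_of_lt (mem_Ico.1 hu).2]]
      split_ifs with hl <;> simp [hl]
    rw [pow_zero, mul_one, this]
    split_ifs <;> simp [Nat.cast_sub hb]
  | succ j ih =>
    rw [show b * 2 ^ (j + 1) = (b + b) * 2 ^ j by ring, countBelow_cell_start_of_block l j le_rfl]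
    push_cast
    rw [ih, pow_succ]
    ring

lemma countBelow_cell_start (hb : 0 < b) (l j : ℕ) {k : ℕ} (hk : k ≤ b) :
    (countBelow (dyadicColoring b p) l ((b + k) * 2 ^ j) : ℤ) =
      (if 0 < l then (b : ℤ) - 1 else 0) + (2 ^ j - 1) * prefixCount p l b +
        2 ^ j * prefixCount p l k := by
  rw [countBelow_cell_start_of_block l j hk]
  push_cast
  rw [countBelow_block_start hb]

lemma countBelow_cell_color (hb : 0 < b) (j : ℕ) {k : ℕ} (hk : k ≤ b) :
    (countBelow (dyadicColoring b p) (p k) ((b + k) * 2 ^ j) : ℤ) =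
      2 ^ j * cellSlope p b k + cellOffset p b k := by
  rw [countBelow_cell_start hb _ j hk, cellSlope, cellOffset]
  push_cast
  ring

lemma edgeSum_cell_start_of_block (hb : 0 < b) (j : ℕ) {k : ℕ} (hk : k ≤ b) :
    (edgeSum (dyadicColoring b p) ((b + k) * 2 ^ j) : ℤ) =
      edgeSum (dyadicColoring b p) (b * 2 ^ j) + (2 ^ j) ^ 2 * slopeSum p b k +
        2 ^ j * offsetSum p b k := by
  induction k with
  | zero => simp [slopeSum, offsetSum]
  | succ k ih =>
    rw [cell_start_succ, edgeSum_add (φ := dyadicColoring b p) (one_le_cell_start hb k j)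
      fun u hu => dyadicColoring_of_mem_cell (by omega) hu]
    push_cast
    rw [ih (by omega), countBelow_cell_color hb j (by omega), slopeSum, offsetSum]
    push_cast
    ring

lemma edgeSum_block_start (hb : 0 < b) (j : ℕ) :
    3 * (edgeSum (dyadicColoring b p) (b * 2 ^ j) : ℤ) =
      slopeSum p b b * ((2 ^ j) ^ 2 - 1) + 3 * offsetSum p b b * (2 ^ j - 1) := by
  induction j with
  | zero =>
    have : edgeSum (dyadicColoring b p) b = 0 := by
      refine sum_eq_zero fun v hv => ?_
      rw [dyadicColoring_of_lt (mem_Ico.1 hv).2, countBelow]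
      simp
    simp [this]
  | succ j ih =>
    have h := edgeSum_cell_start_of_block (b := b) (p := p) hb j le_rfl
    rw [show (b + b) * 2 ^ j = b * 2 ^ (j + 1) by ring] at h
    rw [h, pow_succ]
    linear_combination ih

lemma edgeSum_cell_start (hb : 0 < b) (j : ℕ) {k : ℕ} (hk : k ≤ b) :
    3 * (edgeSum (dyadicColoring b p) ((b + k) * 2 ^ j) : ℤ) =
      (slopeSum p b b + 3 * slopeSum p b k) * (2 ^ j) ^ 2 +
        3 * (offsetSum p b b + offsetSum p b k) * 2 ^ j -
          (slopeSum p b b + 3 * offsetSum p b b) := by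
  rw [edgeSum_cell_start_of_block hb j hk]
  linear_combination edgeSum_block_start (b := b) (p := p) hb j

end BoundaryFormulas

lemma quadratic_nonneg_of_two_le {a β γ x : ℚ} (ha : 0 ≤ a) (h₁ : 0 ≤ 4 * a + β)
    (h₂ : 0 ≤ 4 * a + 2 * β + γ) (hx : 2 ≤ x) : 0 ≤ a * x ^ 2 + β * x + γ := by
  have hshift : a * x ^ 2 + β * x + γ =
      a * (x - 2) ^ 2 + (4 * a + β) * (x - 2) + (4 * a + 2 * β + γ) := by
    ring
  rw [hshift]
  exact add_nonneg
    (add_nonneg (mul_nonneg ha (sq_nonneg _)) (mul_nonneg h₁ (sub_nonneg.2 hx))) h₂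

lemma mul_sq_le_of_affine {c a g θ e s : ℚ} (hc : 0 ≤ c) (h₀ : c * a ^ 2 ≤ e)
    (h₁ : c * (a + g) ^ 2 ≤ e + g * s) (hθ₀ : 0 ≤ θ) (hθg : θ ≤ g) :
    c * (a + θ) ^ 2 ≤ e + θ * s := by
  rcases hθg.eq_or_lt with rfl | hθg
  · exact h₁
  have hg : 0 < g := hθ₀.trans_lt hθg
  have key : g * (e + θ * s - c * (a + θ) ^ 2) =
      (g - θ) * (e - c * a ^ 2) + θ * (e + g * s - c * (a + g) ^ 2) + c * θ * (g - θ) * g := by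
    ring
  have hgθ := sub_nonneg.2 hθg.le
  have : 0 ≤ g * (e + θ * s - c * (a + θ) ^ 2) := by
    rw [key]
    exact add_nonneg
      (add_nonneg (mul_nonneg hgθ (sub_nonneg.2 h₀)) (mul_nonneg hθ₀ (sub_nonneg.2 h₁)))
      (mul_nonneg (mul_nonneg (mul_nonneg hc hθ₀) hgθ) hg.le)
  linarith [(mul_nonneg_iff_of_pos_left hg).1 this]

/-- The hypotheses of `quadratic_nonneg_of_two_le` for `3 (edgeSum n - c n²)` at
`n = (b + k) 2^j`, read as a quadratic in `2^j` through `edgeSum_cell_start`. -/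
def CellCondition (p : ℕ → ℕ) (b : ℕ) (c : ℚ) (k : ℕ) : Prop :=
  let a : ℚ := slopeSum p b b + 3 * slopeSum p b k - 3 * c * ((b + k : ℕ) : ℚ) ^ 2
  let β : ℚ := 3 * (offsetSum p b b + offsetSum p b k)
  let γ : ℚ := -(slopeSum p b b + 3 * offsetSum p b b)
  0 ≤ a ∧ 0 ≤ 4 * a + β ∧ 0 ≤ 4 * a + 2 * β + γ

instance (p : ℕ → ℕ) (b : ℕ) (c : ℚ) (k : ℕ) : Decidable (CellCondition p b c k) := by
  unfold CellCondition
  infer_instance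

section LowerBound

variable {b : ℕ} {p : ℕ → ℕ} {c : ℚ}

lemma mul_sq_le_edgeSum_cell_start (hb : 0 < b) {j k : ℕ} (hj : 1 ≤ j) (hk : k ≤ b)
    (hcell : CellCondition p b c k) :
    c * (((b + k) * 2 ^ j : ℕ) : ℚ) ^ 2 ≤ edgeSum (dyadicColoring b p) ((b + k) * 2 ^ j) := by
  obtain ⟨h₀, h₁, h₂⟩ := hcell
  have hx : (2 : ℚ) ≤ 2 ^ j := le_self_pow₀ one_le_two (by omega)
  have hquad := quadratic_nonneg_of_two_le h₀ h₁ h₂ hx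
  have hedge : 3 * (edgeSum (dyadicColoring b p) ((b + k) * 2 ^ j) : ℚ) =
      (slopeSum p b b + 3 * slopeSum p b k) * (2 ^ j) ^ 2 +
        3 * (offsetSum p b b + offsetSum p b k) * 2 ^ j -
          (slopeSum p b b + 3 * offsetSum p b b) := by
    exact_mod_cast edgeSum_cell_start hb j hk
  push_cast at hquad ⊢
  linarith

theorem mul_sq_le_edgeSum_dyadicColoring (hb : 0 < b) (hc : 0 ≤ c)
    (hcells : ∀ k ≤ b, CellCondition p b c k) {n : ℕ} (hn : 2 * b ≤ n) :
    c * (n : ℚ) ^ 2 ≤ edgeSum (dyadicColoring b p) n := by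
  obtain ⟨j, k, hj, hk, hn⟩ := exists_mem_cell hb hn
  have hconst {t : ℕ} (ht : t ≤ 2 ^ j) :
      ∀ u ∈ Ico ((b + k) * 2 ^ j) ((b + k) * 2 ^ j + t), dyadicColoring b p u = p k :=
    fun u hu => dyadicColoring_of_mem_cell (j := j) hk (by simp only [mem_Ico] at hu ⊢; omega)
  have hstart := mul_sq_le_edgeSum_cell_start hb hj hk.le (hcells k hk.le)
  have hend := mul_sq_le_edgeSum_cell_start hb hj hk (hcells (k + 1) hk)
  rw [cell_start_succ, edgeSum_add (one_le_cell_start hb k j) (hconst le_rfl)] at hend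
  obtain ⟨θ, rfl⟩ := Nat.exists_eq_add_of_le (mem_Ico.1 hn).1
  have hθ : θ ≤ 2 ^ j := by simp only [mem_Ico] at hn; omega
  rw [edgeSum_add (one_le_cell_start hb k j) (hconst hθ)]
  push_cast at hstart hend ⊢
  exact mul_sq_le_of_affine hc hstart hend (by positivity) (by exact_mod_cast hθ)

end LowerBound

/-- The colour of cell `k` is the `k`-th base-`4` digit of this constant. -/
def pattern (k : ℕ) : ℕ :=
  0xfe938a3999999995d76665999999995d93395cd5cd95d5cd5d5d57654f34d734d73335733333333333333333333333333332338e233a2a2a8a8a8a8a8a8a9994 /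
    4 ^ k % 4

lemma dyadicColoring_pattern_lt_four (u : ℕ) : dyadicColoring 256 pattern u < 4 := by
  unfold dyadicColoring pattern
  split_ifs
  · norm_num
  · exact Nat.mod_lt _ four_pos

set_option maxRecDepth 100000 in
lemma cellCondition_pattern : ∀ k ≤ 256, CellCondition pattern 256 (109513 / 584064) k := by
  decide +kernel

theorem exists_I4_free_graph_with_large_liminf :
    ∃ G : SimpleGraph ℕ, ¬ HasIncPath G 4 ∧
      (109513 / 584064 : ℝ) ≤
        liminf (fun n : ℕ => (edgeCount G n : ℝ) / n ^ 2) atTop := by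
  refine ⟨colorGraph (dyadicColoring 256 pattern),
    not_hasIncPath_colorGraph dyadicColoring_pattern_lt_four, le_liminf_edgeCount_div_sq _ ?_⟩
  filter_upwards [eventually_ge_atTop 511] with n hn
  have h := mul_sq_le_edgeSum_dyadicColoring (by norm_num) (by norm_num) cellCondition_pattern
    (show 2 * 256 ≤ n + 1 by omega)
  rw [edgeCount_colorGraph]
  calc (109513 / 584064 : ℝ) * n ^ 2 ≤ 109513 / 584064 * ((n + 1 : ℕ) : ℝ) ^ 2 := by
        gcongr; exact_mod_cast n.le_succ
    _ ≤ _ := by simpa using (Rat.cast_le (K := ℝ)).2 h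
end

section
/- Let k ≥ 2 and l ≥ 1 be integers, let D be a k×l matrix of nonnegative integers, and let C and M be as defined from D. For all integers 1 ≤ k_1 < k_2, the number of edges (i,j) of C with position i lying in the block B_{k_1} and position j lying in the block B_{k_2} equals 2^{k_1 + k_2 − 2} · Σ_{i=1}^{l} Σ_{j=1}^{l} m_{i,j}. -/
open Filter

/-- The atom `D_j`: `d_{1,j}` copies of `1`, then `d_{2,j}` copies of `2`, …,
then `d_{k,j}` copies of `k`. -/
def atomList {k l : ℕ} (D : Fin k → Fin l → ℕ) (j : Fin l) : List ℕ :=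
  (List.finRange k).flatMap fun i => List.replicate (D i j) ((i : ℕ) + 1)

/-- The block `B_m` (for `m ≥ 1`): `2^(m-1)` copies of `D_1`, then `2^(m-1)` copies
of `D_2`, …, then `2^(m-1)` copies of `D_l`, concatenated. -/
def blockList {k l : ℕ} (D : Fin k → Fin l → ℕ) (m : ℕ) : List ℕ :=
  (List.finRange l).flatMap fun j => (List.replicate (2 ^ (m - 1)) (atomList D j)).flatten

/-- The concatenation `B_1 B_2 ⋯ B_m`. -/
def prefixList {k l : ℕ} (D : Fin k → Fin l → ℕ) (m : ℕ) : List ℕ :=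
  (List.range m).flatMap fun x => blockList D (x + 1)

/-- The term `c_r` (1-indexed) of the infinite sequence `C = B_1 B_2 B_3 ⋯`. -/
def seqC {k l : ℕ} (D : Fin k → Fin l → ℕ) (r : ℕ) : ℕ :=
  (prefixList D r).getD (r - 1) 0

/-- The `(i,j)` entry `m_{i,j}` of the matrix `M`:
`m_{i,j} = Σ_{x=1}^{k-1} d_{x,i} (Σ_{y=x+1}^{k} d_{y,j})`. -/
def Ment {k l : ℕ} (D : Fin k → Fin l → ℕ) (i j : Fin l) : ℕ :=
  ∑ x : Fin k, D x i * ∑ y ∈ Finset.Ioi x, D y j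

/-- The number of edges `(i, j)` of `C` (pairs `i < j` with `c_i < c_j`) such that
`a < i ≤ b` and `c < j ≤ d` (positions are 1-indexed). -/
noncomputable def edgesBetween {k l : ℕ} (D : Fin k → Fin l → ℕ) (a b c d : ℕ) : ℕ :=
  {p : ℕ × ℕ | p.1 < p.2 ∧ a < p.1 ∧ p.1 ≤ b ∧ c < p.2 ∧ p.2 ≤ d ∧
    seqC D p.1 < seqC D p.2}.ncard

/-! Summing a function `g` over the block `B_{m+1}` gives `2^m · Σ_j (sum of g over D_j)`, since
`B_{m+1}` is `2^m` copies of each atom. The block `B_{k₁}` lies entirely before `B_{k₂}`, so the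
edges between them are exactly the pairs `(u, v)`, `u` an entry of `B_{k₁}` and `v` one of `B_{k₂}`,
with `u < v`. Applying the block formula to both coordinates yields `2^(k₁-1) · 2^(k₂-1)` times the
number of such pairs between `D_i` and `D_j`, summed over `i, j`; an entry `x + 1` of `D_i` is
smaller than exactly `Σ_{y > x} d_{y,j}` entries of `D_j`, which is `m_{i,j}` after summing over `x`. -/

def crossEdgeCount (A B : List ℕ) : ℕ :=
  (A.map fun u => (B.map fun v => if u < v then 1 else 0).sum).sum

lemma List.sum_range_length_getD {α M : Type*} [AddCommMonoid M] (B : List α) (d : α)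
    (g : α → M) : ∑ x ∈ Finset.range B.length, g (B.getD x d) = (B.map g).sum := by
  induction B with
  | nil => simp
  | cons h t ih => simp [Finset.sum_range_succ', ← ih, add_comm, List.getD_eq_getElem?_getD]

lemma Finset.sum_Ioc_add_eq_sum_range {M : Type*} [AddCommMonoid M] (f : ℕ → M) (a n : ℕ) :
    ∑ i ∈ Finset.Ioc a (a + n), f i = ∑ x ∈ Finset.range n, f (a + 1 + x) := by
  rw [← Finset.Ico_add_one_add_one_eq_Ioc, Finset.sum_Ico_eq_sum_range]
  congr 2
  omega

section Blocks

variable {k l : ℕ} (D : Fin k → Fin l → ℕ)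

lemma sum_map_atomList (g : ℕ → ℕ) (j : Fin l) :
    ((atomList D j).map g).sum = ∑ x : Fin k, D x j * g ((x : ℕ) + 1) := by
  simp [atomList, List.flatMap_def, List.sum_flatten, Fin.sum_univ_def, Function.comp_def]

lemma sum_map_blockList (g : ℕ → ℕ) (m : ℕ) :
    ((blockList D (m + 1)).map g).sum = 2 ^ m * ∑ j : Fin l, ((atomList D j).map g).sum := by
  simp [blockList, List.flatMap_def, List.sum_flatten, Fin.sum_univ_def, List.map_flatten,
    Function.comp_def, List.sum_map_mul_left]

lemma length_blockList (m : ℕ) :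
    (blockList D (m + 1)).length = 2 ^ m * ∑ j : Fin l, (atomList D j).length := by
  simpa using sum_map_blockList D (fun _ => 1) m

lemma crossEdgeCount_blockList (m₁ m₂ : ℕ) :
    crossEdgeCount (blockList D (m₁ + 1)) (blockList D (m₂ + 1)) =
      2 ^ m₁ * 2 ^ m₂ * ∑ i : Fin l, ∑ j : Fin l, Ment D i j := by
  have count_gt (u : Fin k) (j : Fin l) :
      ∑ y : Fin k, D y j * (if (u : ℕ) + 1 < (y : ℕ) + 1 then 1 else 0) =
        ∑ y ∈ Finset.Ioi u, D y j := by
    simp only [Nat.add_lt_add_iff_right, Fin.val_fin_lt, mul_ite, mul_one, mul_zero]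
    rw [← Finset.sum_filter, Finset.filter_lt_eq_Ioi]
  simp only [crossEdgeCount, sum_map_blockList, sum_map_atomList]
  simp only [count_gt, Ment, mul_assoc, Finset.mul_sum]
  refine Finset.sum_congr rfl fun i _ => ?_
  rw [Finset.sum_comm]
  simp only [mul_left_comm]

@[simp]
lemma prefixList_succ (m : ℕ) :
    prefixList D (m + 1) = prefixList D m ++ blockList D (m + 1) := by
  simp [prefixList, List.range_succ]

lemma prefixList_isPrefix {m n : ℕ} (h : m ≤ n) : prefixList D m <+: prefixList D n := by
  induction h with
  | refl => exact List.prefix_refl _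
  | step _ ih => exact ih.trans (by simp)

lemma le_length_prefixList (hD : 0 < ∑ j : Fin l, (atomList D j).length) (m : ℕ) :
    m ≤ (prefixList D m).length := by
  induction m with
  | zero => simp
  | succ m ih =>
    have : 0 < (blockList D (m + 1)).length := by rw [length_blockList]; positivity
    simp only [prefixList_succ, List.length_append]
    omega

lemma seqC_eq_getD_prefixList (hD : 0 < ∑ j : Fin l, (atomList D j).length) {r m : ℕ}
    (hr : 1 ≤ r) (hrm : r ≤ (prefixList D m).length) :
    seqC D r = (prefixList D m).getD (r - 1) 0 := by
  have getD_of_isPrefix {L₁ L₂ : List ℕ} (h : L₁ <+: L₂) {n : ℕ} (hn : n < L₁.length) :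
      L₂.getD n 0 = L₁.getD n 0 := by
    obtain ⟨t, rfl⟩ := h
    exact List.getD_append _ _ _ _ hn
  rcases le_total r m with h | h
  · exact (getD_of_isPrefix (prefixList_isPrefix D h) <|
      (by omega : r - 1 < r).trans_le (le_length_prefixList D hD r)).symm
  · exact getD_of_isPrefix (prefixList_isPrefix D h) (by omega)

lemma seqC_blockList {m x : ℕ} (hx : x < (blockList D (m + 1)).length) :
    seqC D ((prefixList D m).length + 1 + x) = (blockList D (m + 1)).getD x 0 := by
  have hD : 0 < ∑ j : Fin l, (atomList D j).length := by
    rw [length_blockList] at hx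
    exact Nat.pos_of_mul_pos_left (hx.trans_le' (Nat.zero_le x))
  rw [seqC_eq_getD_prefixList D hD (m := m + 1) (by omega) (by simp; omega), prefixList_succ,
    List.getD_append_right _ _ _ _ (by omega)]
  congr 1
  omega

lemma edgesBetween_eq_sum (a n c n' : ℕ) (h : a + n ≤ c) :
    edgesBetween D a (a + n) c (c + n') =
      ∑ x ∈ Finset.range n, ∑ y ∈ Finset.range n',
        if seqC D (a + 1 + x) < seqC D (c + 1 + y) then 1 else 0 := by
  classical
  have hset : {p : ℕ × ℕ | p.1 < p.2 ∧ a < p.1 ∧ p.1 ≤ a + n ∧ c < p.2 ∧ p.2 ≤ c + n' ∧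
      seqC D p.1 < seqC D p.2} =
      ↑{p ∈ Finset.Ioc a (a + n) ×ˢ Finset.Ioc c (c + n') | seqC D p.1 < seqC D p.2} := by
    ext p
    simp only [Set.mem_ofPred_eq, Finset.coe_filter, Finset.mem_product, Finset.mem_Ioc]
    omega
  rw [edgesBetween, hset, Set.ncard_coe_finset, Finset.card_filter, Finset.sum_product]
  simp only [Finset.sum_Ioc_add_eq_sum_range]

lemma edgesBetween_blocks {m₁ m₂ : ℕ} (h : m₁ < m₂) :
    edgesBetween D (prefixList D m₁).length (prefixList D (m₁ + 1)).length
        (prefixList D m₂).length (prefixList D (m₂ + 1)).length =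
      crossEdgeCount (blockList D (m₁ + 1)) (blockList D (m₂ + 1)) := by
  have hle := (prefixList_isPrefix D h).length_le
  simp only [prefixList_succ, List.length_append] at hle ⊢
  rw [edgesBetween_eq_sum D _ _ _ _ hle, crossEdgeCount, ← List.sum_range_length_getD _ 0]
  refine Finset.sum_congr rfl fun x hx => ?_
  rw [← List.sum_range_length_getD _ 0]
  refine Finset.sum_congr rfl fun y hy => ?_
  rw [seqC_blockList D (Finset.mem_range.1 hx), seqC_blockList D (Finset.mem_range.1 hy)]

end Blocks

theorem edges_between_blocks_general (k l : ℕ)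
    (D : Fin k → Fin l → ℕ) (k₁ k₂ : ℕ) (hk₁ : 1 ≤ k₁) (hk₁k₂ : k₁ < k₂) :
    edgesBetween D (prefixList D (k₁ - 1)).length (prefixList D k₁).length
        (prefixList D (k₂ - 1)).length (prefixList D k₂).length =
      2 ^ (k₁ + k₂ - 2) * ∑ i : Fin l, ∑ j : Fin l, Ment D i j := by
  obtain ⟨m₁, rfl⟩ : ∃ m, k₁ = m + 1 := ⟨k₁ - 1, by omega⟩
  obtain ⟨m₂, rfl⟩ : ∃ m, k₂ = m + 1 := ⟨k₂ - 1, by omega⟩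
  rw [Nat.add_sub_cancel, Nat.add_sub_cancel, edgesBetween_blocks D (by omega),
    crossEdgeCount_blockList, ← pow_add]
  congr 2
  omega

/-- Lemma 3.2: for `1 ≤ k₁ < k₂`, the number of edges of `C` with one position in the
block `B_{k₁}` and the other position in the block `B_{k₂}` is
`2^(k₁+k₂-2) · Σ_{i=1}^{l} Σ_{j=1}^{l} m_{i,j}`. -/
theorem edges_between_blocks (k l : ℕ) (hk : 2 ≤ k) (hl : 1 ≤ l)
    (D : Fin k → Fin l → ℕ) (k₁ k₂ : ℕ) (hk₁ : 1 ≤ k₁) (hk₁k₂ : k₁ < k₂) :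
    edgesBetween D (prefixList D (k₁ - 1)).length (prefixList D k₁).length
        (prefixList D (k₂ - 1)).length (prefixList D k₂).length =
      2 ^ (k₁ + k₂ - 2) * ∑ i : Fin l, ∑ j : Fin l, Ment D i j :=
  edges_between_blocks_general k l D k₁ k₂ hk₁ hk₁k₂
end
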